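/- Let M be an m×n Boolean matrix of rank r over the reals, and let S be any set of columns of M. Then the number of distinct vectors of the form sumc(A), ranging over all subsets A ⊆ S, is at most (|S|+1)^r. -/

import Mathlib

/-!
Every column sum of a set of columns lies in the column space `W` of `M`, which has dimension
`r = rank M`. The coordinate functionals restricted to `W` span its dual, so `r` of them form a
basis of it, and a vector of `W` is determined by those `r` coordinates. For a Boolean matrix each
coordinate of `sumc M A` with `A ⊆ S` is an integer in `{0, …, |S|}`, which leaves at most
`(|S| + 1) ^ r` possibilities.
-/

open scoped Classical

def sumc {m n : ℕ} (M : Matrix (Fin m) (Fin n) ℝ) (A : Finset (Fin n)) :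
    Fin m → ℝ :=
  fun i => ∑ j ∈ A, M i j

open Module Finset Matrix

namespace Submodule

variable {K ι : Type*} [Field K] [Fintype ι]

theorem exists_card_eq_finrank_injOn_restrict (W : Submodule K (ι → K)) :
    ∃ s : Finset ι, #s = finrank K W ∧ Set.InjOn (fun (w : ι → K) (i : s) => w i) W := by
  let φ : ι → Dual K W := fun i => (LinearMap.proj i).comp W.subtype
  have hspan : finrank K (span K (Set.range φ)) = finrank K W := by
    have hbot : (span K (Set.range φ)).dualCoannihilator = ⊥ := by
      refine eq_bot_iff.mpr fun w hw => ?_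
      rw [mem_dualCoannihilator] at hw
      rw [mem_bot, ← Subtype.coe_inj]
      funext i
      exact hw (φ i) (subset_span ⟨i, rfl⟩)
    have := Subspace.finrank_add_finrank_dualCoannihilator_eq (span K (Set.range φ))
    rwa [hbot, finrank_bot, add_zero] at this
  obtain ⟨b, -, -, hb_span, hb_li⟩ :=
    exists_linearIndepOn_extension (linearIndepOn_empty K φ) (Set.subset_univ ∅)
  rw [Set.image_univ] at hb_span
  have hb_eq : span K (φ '' b) = span K (Set.range φ) :=
    le_antisymm (span_mono (Set.image_subset_range _ _)) (span_le.mpr hb_span)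
  refine ⟨b.toFinset, ?_, fun v hv w hw hvw => ?_⟩
  · rw [← hspan, ← hb_eq, Set.image_eq_range, finrank_span_eq_card hb_li, Set.toFinset_card]
  · have hker : span K (Set.range φ) ≤ LinearMap.ker (Dual.eval K W ⟨v - w, sub_mem hv hw⟩) := by
      rw [← hb_eq, span_le]
      rintro _ ⟨i, hi, rfl⟩
      simpa [sub_eq_zero, φ] using congrFun hvw ⟨i, by simpa using hi⟩
    funext i
    exact sub_eq_zero.mp (hker (subset_span ⟨i, rfl⟩))

theorem card_le_card_pow_finrank {W : Submodule K (ι → K)} {V : Finset (ι → K)} {T : Finset K}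
    (hVW : ∀ v ∈ V, v ∈ W) (hVT : ∀ v ∈ V, ∀ i, v i ∈ T) : #V ≤ #T ^ finrank K W := by
  obtain ⟨s, hs_card, hs_inj⟩ := W.exists_card_eq_finrank_injOn_restrict
  calc #V ≤ #(Fintype.piFinset fun _ : s => T) :=
        card_le_card_of_injOn _ (fun v hv => Fintype.mem_piFinset.mpr fun i => hVT v hv i)
          (hs_inj.mono hVW)
    _ = #T ^ finrank K W := by simp [hs_card]

end Submodule

theorem sumc_eq_mulVec {m n : ℕ} (M : Matrix (Fin m) (Fin n) ℝ) (A : Finset (Fin n)) :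
    sumc M A = M *ᵥ (A : Set (Fin n)).indicator 1 := by
  funext i
  simp [sumc, mulVec, dotProduct, Set.indicator_apply]

theorem sum_eq_card_filter_of_forall_eq_zero_or_eq_one {α : Type*} (f : α → ℝ)
    (hf : ∀ j, f j = 0 ∨ f j = 1) (A : Finset α) : ∑ j ∈ A, f j = #{j ∈ A | f j = 1} := by
  rw [card_filter, Nat.cast_sum]
  refine sum_congr rfl fun j _ => ?_
  rcases hf j with h | h <;> simp [h]

/-- For a Boolean matrix `M` of rank `r` and any set `S` of columns, the number
of distinct column-sums of subsets of `S` is at most `(|S| + 1) ^ r`. -/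
theorem card_image_sumc_le {m n : ℕ} (M : Matrix (Fin m) (Fin n) ℝ)
    (hM : ∀ i j, M i j = 0 ∨ M i j = 1) (S : Finset (Fin n)) :
    (S.powerset.image (fun A => sumc M A)).card ≤ (S.card + 1) ^ M.rank := by
  calc (S.powerset.image (fun A => sumc M A)).card
      ≤ #((range (#S + 1)).image (Nat.cast : ℕ → ℝ)) ^ M.rank := by
        refine Submodule.card_le_card_pow_finrank ?_ ?_
        · simp only [mem_image]
          rintro _ ⟨A, -, rfl⟩
          exact ⟨_, (sumc_eq_mulVec M A).symm⟩
        · simp only [mem_image, mem_powerset, mem_range]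
          rintro _ ⟨A, hAS, rfl⟩ i
          exact ⟨_, Nat.lt_succ_of_le ((card_filter_le _ _).trans (card_le_card hAS)),
            (sum_eq_card_filter_of_forall_eq_zero_or_eq_one _ (hM i) A).symm⟩
    _ = (#S + 1) ^ M.rank := by rw [card_image_of_injective _ Nat.cast_injective, card_range]
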